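/- Third-order Taylor expansion of the squared distance function: for every X ∈ ℝ³, as h → 0 in ℝ³, ρ²(X + h, X) = Σ_{α,β} C_{αβ}(X) h^α h^β + (1/6) Σ_{α,β,γ} ( ∂C_{αγ}/∂X^β + ∂C_{βγ}/∂X^α + ∂C_{αβ}/∂X^γ )(X) h^α h^β h^γ + o(‖h‖³). -/

import Mathlib

open Asymptotics

/-- Partial derivative of a scalar field on ℝ³ in the coordinate direction `α`. -/
noncomputable def pd (f : (Fin 3 → ℝ) → ℝ) (α : Fin 3) : (Fin 3 → ℝ) → ℝ :=
  fun X => fderiv ℝ f X (Pi.single α 1)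

/-- Right Cauchy–Green tensor component C_{αβ} of the placement χ, as a function of X. -/
noncomputable def CG (χ : (Fin 3 → ℝ) → (Fin 3 → ℝ)) (α β : Fin 3) : (Fin 3 → ℝ) → ℝ :=
  fun X => ∑ i, pd (fun Y => χ Y i) α X * pd (fun Y => χ Y i) β X

private lemma mvt_step {E F : Type*} [NormedAddCommGroup E] [NormedSpace ℝ E]
    [NormedAddCommGroup F] [NormedSpace ℝ F] {f : E → F} {f' : E → E →L[ℝ] F}
    (hd : ∀ x, HasFDerivAt f (f' x) x) (h0 : f 0 = 0) {n : ℕ}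
    (ho : (fun x => ‖f' x‖) =o[nhds 0] fun x => ‖x‖ ^ n) :
    f =o[nhds 0] fun x => ‖x‖ ^ (n + 1) := by
  rw [Asymptotics.isLittleO_iff]
  intro ε hε
  have H := (Asymptotics.isLittleO_iff.mp ho) hε
  rw [Metric.eventually_nhds_iff] at H ⊢
  obtain ⟨δ, hδ, hb⟩ := H
  refine ⟨δ, hδ, fun {h} hhδ => ?_⟩
  have hseg : ∀ x ∈ segment ℝ (0 : E) h, ‖x‖ ≤ ‖h‖ := by
    intro x hx
    rw [segment_eq_image'] at hx
    obtain ⟨t, ht, rfl⟩ := hx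
    simp only [zero_add, sub_zero, norm_smul, Real.norm_eq_abs, abs_of_nonneg ht.1]
    calc t * ‖h‖ ≤ 1 * ‖h‖ :=
          mul_le_mul_of_nonneg_right ht.2 (norm_nonneg _)
      _ = ‖h‖ := one_mul _
  have key : ‖f h - f 0‖ ≤ ε * ‖h‖ ^ n * ‖h - 0‖ := by
    refine (convex_segment (0 : E) h).norm_image_sub_le_of_norm_hasFDerivWithin_le
      (fun x _ => (hd x).hasFDerivWithinAt) ?_
      (left_mem_segment ℝ 0 h) (right_mem_segment ℝ 0 h)
    intro x hx
    have h1 : ‖f' x‖ ≤ ε * ‖‖x‖ ^ n‖ := by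
      have : dist x 0 < δ := by
        rw [dist_zero_right]
        exact lt_of_le_of_lt (hseg x hx) (by rwa [dist_zero_right] at hhδ)
      simpa using hb this
    calc ‖f' x‖ ≤ ε * ‖x‖ ^ n := by
          simpa [abs_of_nonneg (pow_nonneg (norm_nonneg x) n)] using h1
      _ ≤ ε * ‖h‖ ^ n :=
          mul_le_mul_of_nonneg_left (pow_le_pow_left₀ (norm_nonneg x) (hseg x hx) n) hε.le
  rw [h0, sub_zero, sub_zero] at key
  calc ‖f h‖ ≤ ε * ‖h‖ ^ n * ‖h‖ := key
    _ = ε * ‖‖h‖ ^ (n + 1)‖ := by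
        rw [pow_succ, Real.norm_eq_abs,
          abs_of_nonneg (mul_nonneg (pow_nonneg (norm_nonneg h) n) (norm_nonneg h)), mul_assoc]

/-- Second-order Taylor expansion with little-o remainder for a smooth scalar field. -/
private lemma taylor_two {E : Type*} [NormedAddCommGroup E] [NormedSpace ℝ E]
    {φ : E → ℝ} (hφ : ContDiff ℝ (⊤ : ℕ∞) φ) (X : E) :
    (fun h : E => φ (X + h) - φ X - fderiv ℝ φ X h
        - (1 / 2) * fderiv ℝ (fderiv ℝ φ) X h h) =o[nhds 0] fun h => ‖h‖ ^ 2 := by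
  set f1 : E → (E →L[ℝ] ℝ) := fderiv ℝ φ with hf1
  set B : E →L[ℝ] (E →L[ℝ] ℝ) := fderiv ℝ f1 X with hB
  have hφ1 : ContDiff ℝ (⊤ : ℕ∞) f1 := hφ.fderiv_right (by simp)
  have hd1 : ∀ y, HasFDerivAt φ (f1 y) y := fun y =>
    (hφ.differentiable (by simp) y).hasFDerivAt
  have hd2 : ∀ y, HasFDerivAt f1 (fderiv ℝ f1 y) y := fun y =>
    (hφ1.differentiable (by simp) y).hasFDerivAt
  have f2cont : Continuous (fderiv ℝ f1) := (hφ1.fderiv_right (m := (⊤ : ℕ∞)) (by simp)).continuous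
  have trans1 : ∀ h : E, HasFDerivAt (fun h : E => f1 (X + h)) (fderiv ℝ f1 (X + h)) h := by
    intro h
    have := (hd2 (X + h)).comp h ((hasFDerivAt_id h).const_add X)
    simpa [Function.comp_def] using this
  -- step A
  set g : E → (E →L[ℝ] ℝ) := fun h => f1 (X + h) - f1 X - B h with hg
  have gd : ∀ h, HasFDerivAt g (fderiv ℝ f1 (X + h) - B) h := by
    intro h
    exact ((trans1 h).sub_const (f1 X)).sub B.hasFDerivAt
  have g0 : g 0 = 0 := by simp [hg]
  have ho0 : (fun h : E => ‖fderiv ℝ f1 (X + h) - B‖) =o[nhds 0] fun h : E => ‖h‖ ^ 0 := by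
    simp only [pow_zero]
    refine IsLittleO.norm_left (E' := E →L[ℝ] E →L[ℝ] ℝ) ?_
    refine (isLittleO_one_iff ℝ (f := fun h : E => fderiv ℝ f1 (X + h) - B)).mpr ?_
    have hc : Continuous fun h : E => fderiv ℝ f1 (X + h) :=
      f2cont.comp (continuous_const.add continuous_id)
    have := hc.tendsto 0
    simpa [hB] using tendsto_sub_nhds_zero_iff.mpr this
  have gO : g =o[nhds 0] fun h : E => ‖h‖ ^ 1 := mvt_step gd g0 ho0
  -- step B
  have sym : ∀ v w, B v w = B w v := fun v w =>
    second_derivative_symmetric hd1 (hd2 X) v w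
  set r : E → ℝ := fun h => φ (X + h) - φ X - fderiv ℝ φ X h
    - (1 / 2) * fderiv ℝ (fderiv ℝ φ) X h h with hr
  have rd : ∀ h, HasFDerivAt r (g h) h := by
    intro h
    have transφ : HasFDerivAt (fun h : E => φ (X + h)) (f1 (X + h)) h := by
      have := (hd1 (X + h)).comp h ((hasFDerivAt_id h).const_add X)
      simpa [Function.comp_def] using this
    have hquad : HasFDerivAt (fun h : E => (1 / 2 : ℝ) * (B h h)) (B h) h := by
      have hbil : IsBoundedBilinearMap ℝ (fun p : E × E => B p.1 p.2) :=
        B.isBoundedBilinearMap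
      have hdiag : HasFDerivAt (fun h : E => (h, h))
          ((ContinuousLinearMap.id ℝ E).prod (ContinuousLinearMap.id ℝ E)) h :=
        (hasFDerivAt_id h).prodMk (hasFDerivAt_id h)
      have hcomp : HasFDerivAt (fun h : E => B h h)
          ((hbil.deriv (h, h)).comp
            ((ContinuousLinearMap.id ℝ E).prod (ContinuousLinearMap.id ℝ E))) h :=
        HasFDerivAt.comp (f := fun h : E => (h, h)) h (hbil.hasFDerivAt (h, h)) hdiag
      have hmul := hcomp.const_mul (1 / 2 : ℝ)
      refine hmul.congr_fderiv ?_
      ext k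
      simp only [ContinuousLinearMap.smul_apply, ContinuousLinearMap.comp_apply,
        ContinuousLinearMap.prod_apply, ContinuousLinearMap.id_apply,
        IsBoundedBilinearMap.deriv_apply, smul_eq_mul]
      rw [sym k h]
      ring
    have := ((transφ.sub_const (φ X)).sub (f1 X).hasFDerivAt).sub hquad
    exact this
  have r0 : r 0 = 0 := by simp [hr]
  have := mvt_step (n := 1) rd r0 gO.norm_left
  simpa [hr] using this

/-- Per-coordinate cubic estimate. -/
private lemma cube_est {E : Type*} [NormedAddCommGroup E] [NormedSpace ℝ E]
    {φ : E → ℝ} (hφ : ContDiff ℝ (⊤ : ℕ∞) φ) (X : E) :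
    (fun h : E => (φ (X + h) - φ X) ^ 2 - (fderiv ℝ φ X h) ^ 2
        - fderiv ℝ φ X h * fderiv ℝ (fderiv ℝ φ) X h h) =o[nhds 0] fun h => ‖h‖ ^ 3 := by
  have hr : (fun h : E => φ (X + h) - φ X - fderiv ℝ φ X h
      - (1 / 2) * fderiv ℝ (fderiv ℝ φ) X h h) =o[nhds 0] fun h => ‖h‖ ^ 2 :=
    taylor_two hφ X
  set L : E →L[ℝ] ℝ := fderiv ℝ φ X with hL
  set B : E →L[ℝ] (E →L[ℝ] ℝ) := fderiv ℝ (fderiv ℝ φ) X with hB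
  set r : E → ℝ := fun h => φ (X + h) - φ X - L h - (1 / 2) * B h h with hrdef
  -- big-O facts
  have hbO : (fun h : E => B h h) =O[nhds 0] fun h => ‖h‖ ^ 2 := by
    refine IsBigO.of_bound ‖B‖ (Filter.Eventually.of_forall fun h => ?_)
    calc ‖B h h‖ ≤ ‖B h‖ * ‖h‖ := (B h).le_opNorm h
      _ ≤ ‖B‖ * ‖h‖ * ‖h‖ :=
          mul_le_mul_of_nonneg_right (B.le_opNorm h) (norm_nonneg h)
      _ = ‖B‖ * ‖‖h‖ ^ 2‖ := by
          rw [Real.norm_eq_abs, abs_of_nonneg (pow_nonneg (norm_nonneg h) 2)]; ring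
  have hlO : (fun h : E => L h) =O[nhds 0] fun h => ‖h‖ := by
    refine IsBigO.of_bound ‖L‖ (Filter.Eventually.of_forall fun h => ?_)
    simpa using L.le_opNorm h
  have hsq_lt : (fun h : E => ‖h‖ ^ 2) =O[nhds 0] fun h => ‖h‖ := by
    refine IsBigO.of_bound 1 ?_
    have : ∀ᶠ h : E in nhds 0, ‖h‖ < 1 := by
      have := Metric.ball_mem_nhds (0 : E) one_pos
      filter_upwards [this] with h hh
      simpa [dist_zero_right] using hh
    filter_upwards [this] with h hh
    have h0 : (0:ℝ) ≤ ‖h‖ := norm_nonneg h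
    rw [Real.norm_eq_abs, abs_of_nonneg (pow_nonneg h0 2), Real.norm_eq_abs, abs_of_nonneg h0,
      one_mul, pow_two]
    exact mul_le_of_le_one_left h0 hh.le
  have hfactor : (fun h : E => r h + 2 * L h + B h h) =O[nhds 0] fun h => ‖h‖ := by
    have h1 : (fun h : E => r h) =O[nhds 0] fun h => ‖h‖ :=
      (hr.isBigO.trans hsq_lt)
    have h2 : (fun h : E => 2 * L h) =O[nhds 0] fun h => ‖h‖ := (hlO.const_mul_left 2)
    exact (h1.add h2).add (hbO.trans hsq_lt)
  have hmain : (fun h : E => r h * (r h + 2 * L h + B h h)) =o[nhds 0] fun h => ‖h‖ ^ 3 := by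
    have := hr.mul_isBigO hfactor
    refine this.congr' (Filter.EventuallyEq.rfl) (Filter.Eventually.of_forall fun h => ?_)
    show ‖h‖ ^ 2 * ‖h‖ = ‖h‖ ^ 3
    rw [← pow_succ]
  have hbsq : (fun h : E => B h h * B h h / 4) =o[nhds 0] fun h => ‖h‖ ^ 3 := by
    have h4 : (fun h : E => B h h * B h h) =O[nhds 0] fun h => ‖h‖ ^ 2 * ‖h‖ ^ 2 := hbO.mul hbO
    have h5 : (fun h : E => ‖h‖ ^ 2 * ‖h‖ ^ 2) =o[nhds 0] fun h => ‖h‖ ^ 3 := by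
      have h6 : (fun x : ℝ => x ^ 4) =o[nhds 0] fun x : ℝ => x ^ 3 :=
        isLittleO_pow_pow (by norm_num)
      have h7 := h6.comp_tendsto (tendsto_norm_zero : Filter.Tendsto (fun h : E => ‖h‖) (nhds 0) (nhds 0))
      refine h7.congr' (Filter.Eventually.of_forall fun h => ?_) Filter.EventuallyEq.rfl
      simp [Function.comp]; ring
    exact ((h4.trans_isLittleO h5).const_mul_left (1/4)).congr'
      (Filter.Eventually.of_forall fun h => by ring) Filter.EventuallyEq.rfl
  have := hbsq.add hmain
  refine this.congr' (Filter.Eventually.of_forall fun h => ?_) Filter.EventuallyEq.rfl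
  have hu : φ (X + h) - φ X = L h + (1 / 2) * B h h + r h := by
    simp only [hrdef]; ring
  show (B h) h * (B h) h / 4 + r h * (r h + 2 * L h + (B h) h)
      = (φ (X + h) - φ X) ^ 2 - L h ^ 2 - L h * (B h) h
  rw [hu]; ring

private lemma clm_eq (L : (Fin 3 → ℝ) →L[ℝ] ℝ) (h : Fin 3 → ℝ) :
    L h = ∑ α, h α * L (Pi.single α 1) := by
  have hh : h = ∑ α, h α • (Pi.single α 1 : Fin 3 → ℝ) := by
    ext j
    simp [Pi.single_apply]
  conv_lhs => rw [hh]
  rw [map_sum]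
  simp [smul_eq_mul]

private lemma pd_contDiff {φ : (Fin 3 → ℝ) → ℝ} (hφ : ContDiff ℝ (⊤ : ℕ∞) φ) (α : Fin 3) :
    ContDiff ℝ (⊤ : ℕ∞) (pd φ α) :=
  (hφ.fderiv_right (m := (⊤ : ℕ∞)) (by simp)).clm_apply contDiff_const

private lemma pd_pd {φ : (Fin 3 → ℝ) → ℝ} (hφ : ContDiff ℝ (⊤ : ℕ∞) φ) (α β : Fin 3)
    (X : Fin 3 → ℝ) :
    pd (pd φ α) β X = fderiv ℝ (fderiv ℝ φ) X (Pi.single β 1) (Pi.single α 1) := by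
  have hdiff : DifferentiableAt ℝ (fderiv ℝ φ) X :=
    (hφ.fderiv_right (m := (⊤ : ℕ∞)) (by simp)).differentiable (by simp) X
  show fderiv ℝ (fun Y => fderiv ℝ φ Y (Pi.single α 1)) X (Pi.single β 1) = _
  rw [fderiv_clm_apply hdiff (differentiableAt_const _)]
  simp

private lemma clm2_eq {φ : (Fin 3 → ℝ) → ℝ} (hφ : ContDiff ℝ (⊤ : ℕ∞) φ) (X h : Fin 3 → ℝ) :
    fderiv ℝ (fderiv ℝ φ) X h h = ∑ α, ∑ β, pd (pd φ α) β X * h α * h β := by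
  set B : (Fin 3 → ℝ) →L[ℝ] ((Fin 3 → ℝ) →L[ℝ] ℝ) := fderiv ℝ (fderiv ℝ φ) X with hB
  calc B h h = ∑ α, h α * (B h) (Pi.single α 1) := clm_eq (B h) h
    _ = ∑ α, h α * ∑ β, h β * B (Pi.single β 1) (Pi.single α 1) := by
        refine Finset.sum_congr rfl fun α _ => ?_
        congr 1
        have := clm_eq (B.flip (Pi.single α 1)) h
        simpa [ContinuousLinearMap.flip_apply] using this
    _ = ∑ α, ∑ β, pd (pd φ α) β X * h α * h β := by
        refine Finset.sum_congr rfl fun α _ => ?_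
        rw [Finset.mul_sum]
        refine Finset.sum_congr rfl fun β _ => ?_
        rw [pd_pd hφ α β X]; ring

private lemma pd_CG (χ : (Fin 3 → ℝ) → (Fin 3 → ℝ)) (hχ : ContDiff ℝ (⊤ : ℕ∞) χ)
    (α β γ : Fin 3) (X : Fin 3 → ℝ) :
    pd (CG χ α β) γ X = ∑ i, (pd (fun Y => χ Y i) α X * pd (pd (fun Y => χ Y i) β) γ X
      + pd (fun Y => χ Y i) β X * pd (pd (fun Y => χ Y i) α) γ X) := by
  have hφ : ∀ i, ContDiff ℝ (⊤ : ℕ∞) (fun Y => χ Y i) := fun i => contDiff_pi.mp hχ i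
  have hd : ∀ (i : Fin 3) (α' : Fin 3),
      HasFDerivAt (pd (fun Y => χ Y i) α') (fderiv ℝ (pd (fun Y => χ Y i) α') X) X :=
    fun i α' => ((pd_contDiff (hφ i) α').differentiable (by simp) X).hasFDerivAt
  have hsum : HasFDerivAt (CG χ α β)
      (∑ i, (pd (fun Y => χ Y i) α X • fderiv ℝ (pd (fun Y => χ Y i) β) X
        + pd (fun Y => χ Y i) β X • fderiv ℝ (pd (fun Y => χ Y i) α) X)) X := by
    apply HasFDerivAt.fun_sum
    intro i _
    exact (hd i α).mul (hd i β)
  show fderiv ℝ (CG χ α β) X (Pi.single γ 1) = _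
  rw [hsum.fderiv]
  simp only [ContinuousLinearMap.sum_apply, ContinuousLinearMap.add_apply,
    ContinuousLinearMap.smul_apply, smul_eq_mul]
  rfl


/-- Third-order Taylor expansion of the squared distance function:
ρ²(X+h,X) = Σ_{αβ} C_{αβ} h^α h^β
  + (1/6) Σ_{αβγ} (∂C_{αγ}/∂X^β + ∂C_{βγ}/∂X^α + ∂C_{αβ}/∂X^γ) h^α h^β h^γ + o(‖h‖³). -/
theorem piola_rho_sq_third_order_expansion
    (χ : (Fin 3 → ℝ) → (Fin 3 → ℝ)) (hχ : ContDiff ℝ (⊤ : ℕ∞) χ) (X : Fin 3 → ℝ) :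
    (fun h : Fin 3 → ℝ =>
        (∑ i, (χ (X + h) i - χ X i) ^ 2)
          - (∑ α, ∑ β, CG χ α β X * h α * h β)
          - (1 / 6) * ∑ α, ∑ β, ∑ γ,
              (pd (CG χ α γ) β X + pd (CG χ β γ) α X + pd (CG χ α β) γ X)
                * h α * h β * h γ)
      =o[nhds (0 : Fin 3 → ℝ)] (fun h => ‖h‖ ^ 3) := by
  have hφ : ∀ i, ContDiff ℝ (⊤ : ℕ∞) (fun Y => χ Y i) := fun i => contDiff_pi.mp hχ i
  have key : ∀ i ∈ (Finset.univ : Finset (Fin 3)), (fun h : Fin 3 → ℝ =>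
      (χ (X + h) i - χ X i) ^ 2
        - (fderiv ℝ (fun Y => χ Y i) X h) ^ 2
        - fderiv ℝ (fun Y => χ Y i) X h * fderiv ℝ (fderiv ℝ (fun Y => χ Y i)) X h h)
      =o[nhds 0] fun h => ‖h‖ ^ 3 := fun i _ => cube_est (hφ i) X
  have hsum := Asymptotics.IsLittleO.sum key
  refine hsum.congr' (Filter.Eventually.of_forall fun h => ?_) Filter.EventuallyEq.rfl
  have e1 : ∀ i : Fin 3, fderiv ℝ (fun Y => χ Y i) X h
      = ∑ α, pd (fun Y => χ Y i) α X * h α := fun i => by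
    rw [clm_eq]
    exact Finset.sum_congr rfl fun α _ => mul_comm _ _
  have e2 : ∀ i : Fin 3, fderiv ℝ (fderiv ℝ (fun Y => χ Y i)) X h h
      = ∑ α, ∑ β, pd (pd (fun Y => χ Y i) α) β X * h α * h β := fun i =>
    clm2_eq (hφ i) X h
  show (∑ i, ((χ (X + h) i - χ X i) ^ 2
        - (fderiv ℝ (fun Y => χ Y i) X h) ^ 2
        - fderiv ℝ (fun Y => χ Y i) X h * fderiv ℝ (fderiv ℝ (fun Y => χ Y i)) X h h)) = _
  simp only [e1, e2, pd_CG χ hχ, CG, Fin.sum_univ_three]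
  ring
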